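/- Let V be a complex vector space of dimension d ≥ 6 with a nondegenerate symmetric bilinear form B. For i = 1, 2 let Lᵢ ⊆ V be a one-dimensional subspace and uᵢ a nonzero isotropic vector with uᵢ ∈ Lᵢ^⊥ and uᵢ ∉ Lᵢ, and set Wᵢ = (Lᵢ + ℂuᵢ)^⊥. Assume moreover that the restriction of B to L₁ is nonzero (i.e., L₁ is not isotropic). Suppose 𝔥 ⊆ End(V) is a Lie subalgebra (commutator bracket) containing T_{uᵢ,w} for every w ∈ Wᵢ and both i = 1, 2. Then T_{u₁,u₂} ∈ 𝔥. -/

import Mathlib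

/-!
Write `a ∧ b` for `Tmap B a b` and `Wᵢ = (Lᵢ + K uᵢ)^⊥`. The bracket
`[a ∧ b, c ∧ d] = B(b,c) a ∧ d - B(b,d) a ∧ c - B(a,c) b ∧ d + B(a,d) b ∧ c`
gives `[u₁ ∧ x, u₂ ∧ w] = -(B(x,w) u₁ ∧ u₂ + B(u₁,u₂) x ∧ w)` whenever `x ⊥ u₂` and `w ⊥ u₁`.

If `B(u₁,u₂) = 0`, either `u₂ ∈ W₁` or one such bracket with `x ∈ W₁`, `w ∈ W₂` and
`B(x,w) ≠ 0` is a nonzero multiple of `u₁ ∧ u₂`. If `B(u₁,u₂) ≠ 0`, a double bracket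
`[u₁ ∧ a, [u₁ ∧ b, u₂ ∧ w]]` first shows `u₁ ∧ w ∈ 𝔥` for every `w ∈ W₂ ∩ u₁^⊥`; this is where
the anisotropy of `L₁` enters, through the choice of `b ∈ W₁` outside `W₁^⊥`. Then for
`x ∈ W₁ ∩ W₂` the difference `[u₂ ∧ x, u₁ ∧ w] - [u₁ ∧ x, u₂ ∧ w]` equals `2 B(x,w) u₁ ∧ u₂`.

All the vectors needed exist by a dimension count: for a nondegenerate form, if `P^⊥ ⊄ Q` there
are `x ∈ P^⊥` and `y ∈ Q^⊥` with `B(y,x) ≠ 0`, and `dim V ≥ 6` makes `P^⊥` too large to fit in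
the relevant part of `Q`. In the last step `Q = L₂ + K u₂ + K u₁` meets `u₁^⊥ ∩ u₂^⊥` in
dimension at most one because `u₂` is isotropic and `B(u₁,u₂) ≠ 0`.
-/

/-- For a symmetric bilinear form `B` on `V` and vectors `a b : V`, the endomorphism
`x ↦ B(x,b)•a − B(x,a)•b`, which corresponds to `a ∧ b ∈ Λ²V ≅ so(V,B)`. -/
noncomputable def Tmap {K V : Type*} [CommRing K] [AddCommGroup V] [Module K V]
    (B : V →ₗ[K] V →ₗ[K] K) (a b : V) : Module.End K V :=
  (LinearMap.toSpanSingleton K V a).comp (B.flip b) -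
    (LinearMap.toSpanSingleton K V b).comp (B.flip a)

attribute [local instance 100] LieRing.ofAssociativeRing

open Module Submodule

section Tmap

variable {K V : Type*} [CommRing K] [AddCommGroup V] [Module K V] {B : LinearMap.BilinForm K V}

lemma Tmap_apply (a b x : V) : Tmap B a b x = B x b • a - B x a • b := by
  simp [Tmap]

lemma Tmap_swap (a b : V) : Tmap B b a = -Tmap B a b := by
  ext x; simp [Tmap_apply]

lemma lie_Tmap (hB : B.IsSymm) (a b c d : V) :
    ⁅Tmap B a b, Tmap B c d⁆ =
      B b c • Tmap B a d - B b d • Tmap B a c - B a c • Tmap B b d + B a d • Tmap B b c := by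
  ext x
  simp only [Ring.lie_def, LinearMap.sub_apply, Module.End.mul_apply, LinearMap.add_apply,
    LinearMap.smul_apply, Tmap_apply, map_sub, map_smul, smul_sub, smul_smul]
  rw [hB.eq c b, hB.eq d b, hB.eq c a, hB.eq d a]
  module

lemma lie_Tmap_of_apply_eq_zero (hB : B.IsSymm) {u₁ u₂ x w : V} (hx : B u₂ x = 0)
    (hw : B u₁ w = 0) :
    ⁅Tmap B u₁ x, Tmap B u₂ w⁆ = -(B x w • Tmap B u₁ u₂ + B u₁ u₂ • Tmap B x w) := by
  rw [lie_Tmap hB, hB.eq x u₂, hx, hw]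
  module

end Tmap

section LieSubalgebra

variable {K V : Type*} [Field K] [AddCommGroup V] [Module K V] {B : LinearMap.BilinForm K V}
  {𝔥 : LieSubalgebra K (Module.End K V)} {u₁ u₂ : V}

lemma Tmap_mem_of_lie_lie (hB : B.IsSymm) {a b w : V} (hc : B u₁ u₂ ≠ 0) (hab : B a b ≠ 0)
    (ha : Tmap B u₁ a ∈ 𝔥) (hb : Tmap B u₁ b ∈ 𝔥) (hw : Tmap B u₂ w ∈ 𝔥)
    (hbu₁ : B u₁ b = 0) (hbu₂ : B u₂ b = 0) (hbw : B w b = 0) (hwu₁ : B u₁ w = 0) :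
    Tmap B u₁ w ∈ 𝔥 := by
  have hbracket : ⁅Tmap B u₁ a, ⁅Tmap B u₁ b, Tmap B u₂ w⁆⁆ =
      -B u₁ u₂ • (B a b • Tmap B u₁ w - B a w • Tmap B u₁ b) := by
    rw [lie_Tmap_of_apply_eq_zero hB hbu₂ hwu₁, hB.eq b w, hbw, zero_smul, zero_add, lie_neg,
      lie_smul, lie_Tmap hB, hbu₁, hwu₁]
    module
  have h := 𝔥.lie_mem ha (𝔥.lie_mem hb hw)
  rw [hbracket] at h
  have h' : B a b • Tmap B u₁ w ∈ 𝔥 := by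
    simpa using 𝔥.add_mem ((smul_mem_iff 𝔥.toSubmodule (neg_ne_zero.2 hc)).1 h)
      (𝔥.smul_mem (B a w) hb)
  exact (smul_mem_iff 𝔥.toSubmodule hab).1 h'

lemma Tmap_mem_of_lie_sub_lie (hB : B.IsSymm) (h2 : (2 : K) ≠ 0) {x w : V}
    (hx₁ : Tmap B u₁ x ∈ 𝔥) (hx₂ : Tmap B u₂ x ∈ 𝔥) (hw₁ : Tmap B u₁ w ∈ 𝔥)
    (hw₂ : Tmap B u₂ w ∈ 𝔥) (hxu₁ : B u₁ x = 0) (hxu₂ : B u₂ x = 0) (hwu₁ : B u₁ w = 0)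
    (hwu₂ : B u₂ w = 0) (hxw : B x w ≠ 0) :
    Tmap B u₁ u₂ ∈ 𝔥 := by
  have hdiff : ⁅Tmap B u₂ x, Tmap B u₁ w⁆ - ⁅Tmap B u₁ x, Tmap B u₂ w⁆ =
      (2 * B x w) • Tmap B u₁ u₂ := by
    rw [lie_Tmap_of_apply_eq_zero hB hxu₁ hwu₂, lie_Tmap_of_apply_eq_zero hB hxu₂ hwu₁,
      hB.eq u₂ u₁, Tmap_swap u₁ u₂]
    module
  have h := 𝔥.sub_mem (𝔥.lie_mem hx₂ hw₁) (𝔥.lie_mem hx₁ hw₂)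
  rw [hdiff] at h
  exact (smul_mem_iff 𝔥.toSubmodule (mul_ne_zero h2 hxw)).1 h

end LieSubalgebra

lemma Submodule.finrank_sup_span_singleton_le {K V : Type*} [Field K] [AddCommGroup V]
    [Module K V] [FiniteDimensional K V] (N : Submodule K V) (v : V) :
    finrank K ↥(N ⊔ K ∙ v) ≤ finrank K N + 1 := by
  by_cases hv : v ∈ N
  · rw [sup_eq_left.2 ((span_singleton_le_iff_mem v N).2 hv)]
    omega
  · rw [finrank_sup_span_singleton hv]

namespace LinearMap.BilinForm

section CommSemiring

variable {R M : Type*} [CommSemiring R] [AddCommMonoid M] [Module R M]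
  {B : LinearMap.BilinForm R M}

lemma mem_orthogonal_span_singleton_iff {v x : M} : x ∈ B.orthogonal (R ∙ v) ↔ B v x = 0 := by
  refine ⟨fun h => h v (mem_span_singleton_self v), fun h n hn => ?_⟩
  obtain ⟨t, rfl⟩ := mem_span_singleton.1 hn
  simp [h]

lemma orthogonal_sup (N N' : Submodule R M) :
    B.orthogonal (N ⊔ N') = B.orthogonal N ⊓ B.orthogonal N' := by
  refine le_antisymm (le_inf (orthogonal_le le_sup_left) (orthogonal_le le_sup_right)) ?_
  rintro x ⟨hN, hN'⟩ n hn
  obtain ⟨a, ha, a', ha', rfl⟩ := mem_sup.1 hn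
  simp [hN a ha, hN' a' ha']

end CommSemiring

variable {K V : Type*} [Field K] [AddCommGroup V] [Module K V] {B : LinearMap.BilinForm K V}

lemma exists_apply_self_ne_zero_of_finrank_eq_one {L : Submodule K V} (hL : finrank K L = 1)
    (h : ∃ l ∈ L, ∃ l' ∈ L, B l l' ≠ 0) : ∃ l ∈ L, B l l ≠ 0 := by
  obtain ⟨l, hl, l', hl', hll'⟩ := h
  have hl0 : l ≠ 0 := by rintro rfl; simp at hll'
  obtain ⟨t, rfl⟩ :=
    mem_span_singleton.1 (eq_span_singleton_of_mem_of_finrank_eq_one hL hl hl0 ▸ hl')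
  refine ⟨l, hl, fun h => hll' ?_⟩
  simp [h]

variable [FiniteDimensional K V]

lemma finrank_inf_orthogonal_span_singleton_lt {N : Submodule K V} {v n : V} (hn : n ∈ N)
    (hvn : B v n ≠ 0) : finrank K ↥(N ⊓ B.orthogonal (K ∙ v)) < finrank K N := by
  refine finrank_lt_finrank_of_lt (lt_of_le_of_ne inf_le_left fun h => hvn ?_)
  rw [← h] at hn
  exact mem_orthogonal_span_singleton_iff.1 hn.2

lemma exists_apply_ne_zero_of_finrank_inf_lt (hnd : B.Nondegenerate) (hB : B.IsRefl)
    {P Q : Submodule K V} (h : finrank K ↥(Q ⊓ B.orthogonal P) < finrank K V - finrank K P) :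
    ∃ x ∈ B.orthogonal P, ∃ y ∈ B.orthogonal Q, B y x ≠ 0 := by
  rw [← finrank_orthogonal hnd] at h
  obtain ⟨x, hxP, hxQ⟩ : ∃ x ∈ B.orthogonal P, x ∉ Q :=
    SetLike.not_le_iff_exists.1 fun hle => h.ne (by rw [inf_eq_right.2 hle])
  refine ⟨x, hxP, ?_⟩
  by_contra! hall
  rw [← orthogonal_orthogonal hnd hB Q] at hxQ
  exact hxQ hall

end LinearMap.BilinForm

section

variable {K V : Type*} [Field K] [AddCommGroup V] [Module K V] [FiniteDimensional K V]
  {B : LinearMap.BilinForm K V} {𝔥 : LieSubalgebra K (Module.End K V)} {L₁ L₂ : Submodule K V}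
  {u₁ u₂ : V}

open LinearMap.BilinForm

theorem Tmap_mem_of_apply_eq_zero (hd : 6 ≤ finrank K V) (hB : B.IsSymm)
    (hnd : B.Nondegenerate) (hL₁ : finrank K L₁ ≤ 1) (hL₂ : finrank K L₂ ≤ 1)
    (h₁ : ∀ w ∈ B.orthogonal L₁, B u₁ w = 0 → Tmap B u₁ w ∈ 𝔥)
    (h₂ : ∀ w ∈ B.orthogonal L₂, B u₂ w = 0 → Tmap B u₂ w ∈ 𝔥)
    (hc : B u₁ u₂ = 0) : Tmap B u₁ u₂ ∈ 𝔥 := by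
  by_cases hu₂ : u₂ ∈ B.orthogonal L₁
  · exact h₁ u₂ hu₂ hc
  obtain ⟨l, hl, hlu₂⟩ : ∃ l ∈ L₁, B l u₂ ≠ 0 := by simpa using hu₂
  have hM₁ := finrank_sup_span_singleton_le L₁ u₁
  have hP := finrank_sup_span_singleton_le (L₁ ⊔ K ∙ u₁) u₂
  have hM₂ := finrank_sup_span_singleton_le L₂ u₂
  have hQ := finrank_sup_span_singleton_le (L₂ ⊔ K ∙ u₂) u₁
  have hle := finrank_mono <| inf_le_inf_left (L₂ ⊔ K ∙ u₂ ⊔ K ∙ u₁) <|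
    orthogonal_le (B := B) <| (span_singleton_le_iff_mem l (L₁ ⊔ K ∙ u₁ ⊔ K ∙ u₂)).2 <|
      mem_sup_left (mem_sup_left hl)
  have hlt := finrank_inf_orthogonal_span_singleton_lt (B := B)
    (mem_sup_left (mem_sup_right (mem_span_singleton_self u₂)) : u₂ ∈ L₂ ⊔ K ∙ u₂ ⊔ K ∙ u₁) hlu₂
  obtain ⟨x, hx, w, hw, hwx⟩ := exists_apply_ne_zero_of_finrank_inf_lt hnd hB.isRefl
    (P := L₁ ⊔ K ∙ u₁ ⊔ K ∙ u₂) (Q := L₂ ⊔ K ∙ u₂ ⊔ K ∙ u₁) (by omega)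
  simp only [orthogonal_sup, mem_inf, mem_orthogonal_span_singleton_iff] at hx hw
  obtain ⟨⟨hxL₁, hxu₁⟩, hxu₂⟩ := hx
  obtain ⟨⟨hwL₂, hwu₂⟩, hwu₁⟩ := hw
  have h := 𝔥.lie_mem (h₁ x hxL₁ hxu₁) (h₂ w hwL₂ hwu₂)
  rw [lie_Tmap_of_apply_eq_zero hB hxu₂ hwu₁, hc, zero_smul, add_zero, neg_mem_iff] at h
  exact (smul_mem_iff 𝔥.toSubmodule (by rwa [hB.eq])).1 h

theorem Tmap_mem_of_Tmap_mem (hd : 6 ≤ finrank K V) (hB : B.IsSymm) (hnd : B.Nondegenerate)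
    (hL₁ : finrank K L₁ ≤ 1) {l : V} (hl : l ∈ L₁) (hll : B l l ≠ 0)
    (h₁ : ∀ w ∈ B.orthogonal L₁, B u₁ w = 0 → Tmap B u₁ w ∈ 𝔥) (hc : B u₁ u₂ ≠ 0) {w : V}
    (hw : Tmap B u₂ w ∈ 𝔥) (hwu₁ : B u₁ w = 0) : Tmap B u₁ w ∈ 𝔥 := by
  have hM₁ := finrank_sup_span_singleton_le L₁ u₁
  have hP₁ := finrank_sup_span_singleton_le (L₁ ⊔ K ∙ u₁) u₂
  have hP := finrank_sup_span_singleton_le (L₁ ⊔ K ∙ u₁ ⊔ K ∙ u₂) w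
  have hle := finrank_mono <| inf_le_inf_left (L₁ ⊔ K ∙ u₁) <| orthogonal_le (B := B) <|
    (span_singleton_le_iff_mem l (L₁ ⊔ K ∙ u₁ ⊔ K ∙ u₂ ⊔ K ∙ w)).2 <|
      mem_sup_left (mem_sup_left (mem_sup_left hl))
  have hlt := finrank_inf_orthogonal_span_singleton_lt (mem_sup_left hl : l ∈ L₁ ⊔ K ∙ u₁) hll
  obtain ⟨b, hb, a, ha, hab⟩ := exists_apply_ne_zero_of_finrank_inf_lt hnd hB.isRefl
    (P := L₁ ⊔ K ∙ u₁ ⊔ K ∙ u₂ ⊔ K ∙ w) (Q := L₁ ⊔ K ∙ u₁) (by omega)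
  simp only [orthogonal_sup, mem_inf, mem_orthogonal_span_singleton_iff] at hb ha
  obtain ⟨⟨⟨hbL₁, hbu₁⟩, hbu₂⟩, hbw⟩ := hb
  obtain ⟨haL₁, hau₁⟩ := ha
  exact Tmap_mem_of_lie_lie hB hc hab (h₁ a haL₁ hau₁) (h₁ b hbL₁ hbu₁) hw hbu₁ hbu₂ hbw hwu₁

theorem Tmap_mem_of_apply_ne_zero (hd : 6 ≤ finrank K V) (hB : B.IsSymm)
    (hnd : B.Nondegenerate) (h2 : (2 : K) ≠ 0) (hL₁ : finrank K L₁ ≤ 1)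
    (hL₂ : finrank K L₂ ≤ 1) (hiso₂ : B u₂ u₂ = 0) {l : V} (hl : l ∈ L₁) (hll : B l l ≠ 0)
    (h₁ : ∀ w ∈ B.orthogonal L₁, B u₁ w = 0 → Tmap B u₁ w ∈ 𝔥)
    (h₂ : ∀ w ∈ B.orthogonal L₂, B u₂ w = 0 → Tmap B u₂ w ∈ 𝔥)
    (hc : B u₁ u₂ ≠ 0) : Tmap B u₁ u₂ ∈ 𝔥 := by
  have hM₁ := finrank_sup_span_singleton_le L₁ u₁
  have hM₂ := finrank_sup_span_singleton_le L₂ u₂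
  have hQ := finrank_sup_span_singleton_le (L₂ ⊔ K ∙ u₂) u₁
  have hP := finrank_add_le_finrank_add_finrank (L₁ ⊔ K ∙ u₁) (L₂ ⊔ K ∙ u₂)
  have hu₁Q : u₁ ∈ L₂ ⊔ K ∙ u₂ ⊔ K ∙ u₁ := mem_sup_right (mem_span_singleton_self u₁)
  have hu₂Q : u₂ ∈ (L₂ ⊔ K ∙ u₂ ⊔ K ∙ u₁) ⊓ B.orthogonal (K ∙ u₂) :=
    ⟨mem_sup_left (mem_sup_right (mem_span_singleton_self u₂)),
      mem_orthogonal_span_singleton_iff.2 hiso₂⟩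
  have hle : (L₂ ⊔ K ∙ u₂ ⊔ K ∙ u₁) ⊓ B.orthogonal (L₁ ⊔ K ∙ u₁ ⊔ (L₂ ⊔ K ∙ u₂)) ≤
      (L₂ ⊔ K ∙ u₂ ⊔ K ∙ u₁) ⊓ B.orthogonal (K ∙ u₂) ⊓ B.orthogonal (K ∙ u₁) := fun y hy =>
    ⟨⟨hy.1, mem_orthogonal_span_singleton_iff.2 <|
        hy.2 u₂ (mem_sup_right (mem_sup_right (mem_span_singleton_self u₂)))⟩,
      mem_orthogonal_span_singleton_iff.2 <|
        hy.2 u₁ (mem_sup_left (mem_sup_right (mem_span_singleton_self u₁)))⟩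
  have hlt₂ := finrank_inf_orthogonal_span_singleton_lt hu₂Q hc
  have hlt₁ := finrank_inf_orthogonal_span_singleton_lt hu₁Q (by rwa [hB.eq])
  obtain ⟨x, hx, w, hw, hwx⟩ := exists_apply_ne_zero_of_finrank_inf_lt hnd hB.isRefl
    (P := L₁ ⊔ K ∙ u₁ ⊔ (L₂ ⊔ K ∙ u₂)) (Q := L₂ ⊔ K ∙ u₂ ⊔ K ∙ u₁)
    (by have := finrank_mono hle; omega)
  simp only [orthogonal_sup, mem_inf, mem_orthogonal_span_singleton_iff] at hx hw
  obtain ⟨⟨hxL₁, hxu₁⟩, hxL₂, hxu₂⟩ := hx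
  obtain ⟨⟨hwL₂, hwu₂⟩, hwu₁⟩ := hw
  have hw₂ := h₂ w hwL₂ hwu₂
  exact Tmap_mem_of_lie_sub_lie hB h2 (h₁ x hxL₁ hxu₁) (h₂ x hxL₂ hxu₂)
    (Tmap_mem_of_Tmap_mem hd hB hnd hL₁ hl hll h₁ hc hw₂ hwu₁) hw₂ hxu₁ hxu₂ hwu₁ hwu₂
    (by rwa [hB.eq])

theorem Tmap_mem_of_forall_Tmap_mem (hd : 6 ≤ finrank K V) (hB : B.IsSymm)
    (hnd : B.Nondegenerate) (h2 : (2 : K) ≠ 0) (hL₁ : finrank K L₁ ≤ 1)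
    (hL₂ : finrank K L₂ ≤ 1) (hiso₂ : B u₂ u₂ = 0) (hL₁ne : ∃ l ∈ L₁, B l l ≠ 0)
    (h₁ : ∀ w ∈ B.orthogonal L₁, B u₁ w = 0 → Tmap B u₁ w ∈ 𝔥)
    (h₂ : ∀ w ∈ B.orthogonal L₂, B u₂ w = 0 → Tmap B u₂ w ∈ 𝔥) : Tmap B u₁ u₂ ∈ 𝔥 := by
  obtain ⟨l, hl, hll⟩ := hL₁ne
  by_cases hc : B u₁ u₂ = 0
  · exact Tmap_mem_of_apply_eq_zero hd hB hnd hL₁ hL₂ h₁ h₂ hc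
  · exact Tmap_mem_of_apply_ne_zero hd hB hnd h2 hL₁ hL₂ hiso₂ hl hll h₁ h₂ hc

end

theorem stmt3_general (V : Type*) [AddCommGroup V] [Module ℂ V] [FiniteDimensional ℂ V]
    (hd : 6 ≤ Module.finrank ℂ V)
    (B : V →ₗ[ℂ] V →ₗ[ℂ] ℂ) (hsymm : ∀ x y : V, B x y = B y x)
    (hnd : ∀ x : V, (∀ y : V, B x y = 0) → x = 0)
    (L₁ L₂ : Submodule ℂ V)
    (hL₁ : Module.finrank ℂ L₁ = 1) (hL₂ : Module.finrank ℂ L₂ = 1)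
    (u₁ u₂ : V)
    (hiso₂ : B u₂ u₂ = 0)
    -- the restriction of `B` to `L₁` is nonzero
    (hL₁ne : ∃ l ∈ L₁, ∃ l' ∈ L₁, B l l' ≠ 0)
    (𝔥 : LieSubalgebra ℂ (Module.End ℂ V))
    -- `W₁ = (L₁ + ℂu₁)^⊥`: the elements orthogonal to `u₁` and to all of `L₁`
    (h₁ : ∀ w : V, B w u₁ = 0 → (∀ l ∈ L₁, B w l = 0) → Tmap B u₁ w ∈ 𝔥)
    (h₂ : ∀ w : V, B w u₂ = 0 → (∀ l ∈ L₂, B w l = 0) → Tmap B u₂ w ∈ 𝔥) :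
    Tmap B u₁ u₂ ∈ 𝔥 := by
  exact Tmap_mem_of_forall_Tmap_mem hd ⟨hsymm⟩
    (LinearMap.BilinForm.Nondegenerate.ofSeparatingLeft hnd) two_ne_zero hL₁.le hL₂.le hiso₂
    (LinearMap.BilinForm.exists_apply_self_ne_zero_of_finrank_eq_one hL₁ hL₁ne)
    (fun w hw hwu₁ => h₁ w ((hsymm w u₁).trans hwu₁) fun l hl => (hsymm w l).trans (hw l hl))
    (fun w hw hwu₂ => h₂ w ((hsymm w u₂).trans hwu₂) fun l hl => (hsymm w l).trans (hw l hl))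

theorem stmt3 (V : Type*) [AddCommGroup V] [Module ℂ V] [FiniteDimensional ℂ V]
    (hd : 6 ≤ Module.finrank ℂ V)
    (B : V →ₗ[ℂ] V →ₗ[ℂ] ℂ) (hsymm : ∀ x y : V, B x y = B y x)
    (hnd : ∀ x : V, (∀ y : V, B x y = 0) → x = 0)
    (L₁ L₂ : Submodule ℂ V)
    (hL₁ : Module.finrank ℂ L₁ = 1) (hL₂ : Module.finrank ℂ L₂ = 1)
    (u₁ u₂ : V) (hu₁ : u₁ ≠ 0) (hu₂ : u₂ ≠ 0)
    (hiso₁ : B u₁ u₁ = 0) (hiso₂ : B u₂ u₂ = 0)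
    (hu₁L : ∀ l ∈ L₁, B u₁ l = 0) (hu₂L : ∀ l ∈ L₂, B u₂ l = 0)
    (hu₁nL : u₁ ∉ L₁) (hu₂nL : u₂ ∉ L₂)
    -- the restriction of `B` to `L₁` is nonzero
    (hL₁ne : ∃ l ∈ L₁, ∃ l' ∈ L₁, B l l' ≠ 0)
    (𝔥 : LieSubalgebra ℂ (Module.End ℂ V))
    -- `W₁ = (L₁ + ℂu₁)^⊥`: the elements orthogonal to `u₁` and to all of `L₁`
    (h₁ : ∀ w : V, B w u₁ = 0 → (∀ l ∈ L₁, B w l = 0) → Tmap B u₁ w ∈ 𝔥)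
    (h₂ : ∀ w : V, B w u₂ = 0 → (∀ l ∈ L₂, B w l = 0) → Tmap B u₂ w ∈ 𝔥) :
    Tmap B u₁ u₂ ∈ 𝔥 :=
  stmt3_general V hd B hsymm hnd L₁ L₂ hL₁ hL₂ u₁ u₂ hiso₂ hL₁ne 𝔥 h₁ h₂
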